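/- Let (X, ω) be a Hermitian vector space of complex dimension n and η a real (1,1)-form with eigenvalues α_1 ≤ α_2 ≤ ... ≤ α_n with respect to an orthonormal diagonalizing basis. Then the following are equivalent: (i) η ∧ ω^{q-1} is weakly positive; (ii) η ∧ ω^{q-1} is strongly positive; (iii) the sum of any q eigenvalues of η is non-negative, equivalently α_1 + ... + α_q ≥ 0. -/

import Mathlib

/-!
STATEMENT 13.  Let `(X, ω)` be a Hermitian vector space of complex dimension `n`
(we take `X = ℂⁿ` with the standard Hermitian inner product and its Kähler form `ω`)
and let `η` be the real `(1,1)`-form with eigenvalues `α₁ ≤ … ≤ α_n` with respect to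
the (standard) orthonormal diagonalizing coframe, `η = -√-1 Σ α_i ξ_i ∧ ξ̄_i`.
Then the following are equivalent:
(i) `η ∧ ω^{q-1}` is weakly positive;
(ii) `η ∧ ω^{q-1}` is strongly positive;
(iii) the sum of any `q` eigenvalues of `η` is non-negative, equivalently
`α₁ + … + α_q ≥ 0`.

`(p,p)`-forms are encoded in block form `(x₁,…,x_p; ȳ₁,…,ȳ_p) ↦ ρ(x; ȳ)`; weak
positivity means `(±√-1)^p ρ(x₁, x̄₁, …, x_p, x̄_p) ≥ 0` for all `(1,0)`-vectors, and
strong positivity means `ρ` is a non-negative combination of products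
`(√-1)^p ξ₁ ∧ ξ̄₁ ∧ … ∧ ξ_p ∧ ξ̄_p` of `(1,0)`-coframes.
-/

noncomputable section

open scoped BigOperators

abbrev Blk (V : Type*) (p q : ℕ) := (Fin p → V) → (Fin q → V) → ℂ

def wedgeBlk (V : Type*) (p₁ q₁ p₂ q₂ : ℕ) (f : Blk V p₁ q₁) (g : Blk V p₂ q₂) :
    Blk V (p₁ + p₂) (q₁ + q₂) := fun x y =>
  (((p₁.factorial * p₂.factorial * q₁.factorial * q₂.factorial : ℕ) : ℂ))⁻¹ *
    ∑ σ : Equiv.Perm (Fin (p₁ + p₂)), ∑ τ : Equiv.Perm (Fin (q₁ + q₂)),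
      ((Equiv.Perm.sign σ : ℤ) : ℂ) * ((Equiv.Perm.sign τ : ℤ) : ℂ) *
        f (fun i => x (σ (Fin.castAdd p₂ i))) (fun j => y (τ (Fin.castAdd q₂ j))) *
        g (fun i => x (σ (Fin.natAdd p₁ i))) (fun j => y (τ (Fin.natAdd q₁ j)))

/-- Wedge powers of a `(1,1)`-form. -/
def powBlk {V : Type*} (ω : Blk V 1 1) : (k : ℕ) → Blk V k k
  | 0 => fun _ _ => 1
  | k + 1 => fun x y =>
      wedgeBlk V 1 1 k k ω (powBlk ω k)
        (fun i => x (Fin.cast (by omega) i)) (fun j => y (Fin.cast (by omega) j))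

/-- Weak positivity of a block-encoded `(k,k)`-form. -/
def WeakPos {V : Type*} (k : ℕ) (F : Blk V k k) : Prop :=
  ∀ x : Fin k → V,
    0 ≤ (Complex.I ^ k * F x x).re ∧ (Complex.I ^ k * F x x).im = 0

/-- Strong positivity of a block-encoded `(k,k)`-form: a non-negative combination of
products `(√-1)^k ξ₁ ∧ ξ̄₁ ∧ … ∧ ξ_k ∧ ξ̄_k` (in block encoding such a product has the
value `det (ξ_a (x_b)) ⬝ conj (det (ξ_a (y_b)))`, up to the universal constant). -/
def StrongPos {V : Type*} [AddCommGroup V] [Module ℂ V] (k : ℕ) (F : Blk V k k) : Prop :=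
  ∃ (N : ℕ) (c : Fin N → ℝ) (ξ : Fin N → Fin k → (V →ₗ[ℂ] ℂ)),
    (∀ m, 0 ≤ c m) ∧
    ∀ x y, F x y = ∑ m, (c m : ℂ) *
      ((-Complex.I) ^ k * Matrix.det (Matrix.of fun a b => ξ m a (x b)) *
        (starRingEnd ℂ) (Matrix.det (Matrix.of fun a b => ξ m a (y b))))

/-!
Expanding the wedge products, `η ∧ ω^{q-1}` becomes the antisymmetrisation of a product of
diagonal kernels; multiplying out the kernels turns the permutation sums into products of
`q × q` minors, and grouping the injective index maps by their image gives
`η ∧ ω^{q-1} = (q-1)! Σ_{|S| = q} (Σ_{i ∈ S} α_i) (√-1)^q ξ_S ∧ ξ̄_S`,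
`ξ_S = ξ_{s₁} ∧ … ∧ ξ_{s_q}`. A diagonal combination of the elementary forms `ξ_S ∧ ξ̄_S` is
strongly positive as soon as its coefficients are non-negative, while evaluating it on the basis
vectors indexed by `S` returns the coefficient of `S`, so weak positivity already forces
non-negativity. Since `α` is monotone, `α₁ + … + α_q` is the least of the sums over `q`-subsets.
-/

open Equiv

local notation "ε " σ:max => ((Equiv.Perm.sign σ : ℤ) : ℂ)

theorem Fintype.sum_sum_mul_eq_card_smul {G ι β : Type*} [Group G] [Fintype G] [Fintype ι]
    [AddCommMonoid β] (φ : ι → G) (Φ : G → β) :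
    ∑ g, ∑ i, Φ (g * φ i) = Fintype.card ι • ∑ g, Φ g := by
  rw [Finset.sum_comm, ← Finset.card_univ, ← Finset.sum_const]
  exact Finset.sum_congr rfl fun i _ => Equiv.sum_comp (Equiv.mulRight (φ i)) Φ

def Equiv.Perm.natAdd (k : ℕ) {m : ℕ} (e : Perm (Fin m)) : Perm (Fin (k + m)) :=
  permCongr finSumFinEquiv (sumCongr 1 e)

@[simp] theorem Equiv.Perm.natAdd_castAdd (k : ℕ) {m : ℕ} (e : Perm (Fin m)) (i : Fin k) :
    natAdd k e (Fin.castAdd m i) = Fin.castAdd m i := by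
  simp [natAdd, permCongr_apply]

@[simp] theorem Equiv.Perm.natAdd_natAdd (k : ℕ) {m : ℕ} (e : Perm (Fin m)) (j : Fin m) :
    natAdd k e (Fin.natAdd k j) = Fin.natAdd k (e j) := by
  simp [natAdd, permCongr_apply]

@[simp] theorem Equiv.Perm.sign_natAdd (k : ℕ) {m : ℕ} (e : Perm (Fin m)) :
    sign (natAdd k e) = sign e := by
  simp [natAdd, sign_permCongr, sign_sumCongr]

/-- The block form of `k₁ ∧ … ∧ k_N` for `(1,1)`-forms given by the kernels `k_j`. -/
def altProd {ι V : Type*} [Fintype ι] [DecidableEq ι] (k : ι → V → V → ℂ) (x y : ι → V) : ℂ :=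
  ∑ σ : Perm ι, ∑ τ : Perm ι, ε σ * ε τ * ∏ j, k j (x (σ j)) (y (τ j))

theorem altProd_comp_equiv {ι κ V : Type*} [Fintype ι] [DecidableEq ι] [Fintype κ]
    [DecidableEq κ] (e : ι ≃ κ) (k : κ → V → V → ℂ) (x y : κ → V) :
    altProd (k ∘ e) (x ∘ e) (y ∘ e) = altProd k x y := by
  unfold altProd
  refine Fintype.sum_equiv (permCongr e) _ _ fun σ => Fintype.sum_equiv (permCongr e) _ _
    fun τ => ?_
  simp only [Perm.sign_permCongr, Function.comp_apply, permCongr_apply]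
  congr 1
  exact Fintype.prod_equiv e _ _ fun j => by rw [symm_apply_apply]

theorem wedgeBlk_one_altProd {V : Type*} {m : ℕ} (f : Blk V 1 1) (k : Fin m → V → V → ℂ)
    (x y : Fin (1 + m) → V) :
    wedgeBlk V 1 1 m m f (altProd k) x y =
      altProd (Fin.append (fun _ a b => f (fun _ => a) (fun _ => b)) k) x y := by
  set K := Fin.append (fun (_ : Fin 1) a b => f (fun _ => a) (fun _ => b)) k
  set Φ : Perm (Fin (1 + m)) → Perm (Fin (1 + m)) → ℂ :=
    fun ρ π => ε ρ * ε π * ∏ j, K j (x (ρ j)) (y (π j))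
  have hterm : ∀ σ τ σ' τ', ε σ * ε τ * f (fun i => x (σ (Fin.castAdd m i)))
      (fun i => y (τ (Fin.castAdd m i))) *
      (ε σ' * ε τ' * ∏ j, k j (x (σ (Fin.natAdd 1 (σ' j)))) (y (τ (Fin.natAdd 1 (τ' j))))) =
      Φ (σ * Perm.natAdd 1 σ') (τ * Perm.natAdd 1 τ') := by
    intro σ τ σ' τ'
    have hx : (fun i => x (σ (Fin.castAdd m i))) = fun _ => x (σ (Fin.castAdd m 0)) := by
      funext i; rw [Subsingleton.elim i 0]
    have hy : (fun i => y (τ (Fin.castAdd m i))) = fun _ => y (τ (Fin.castAdd m 0)) := by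
      funext i; rw [Subsingleton.elim i 0]
    simp only [Φ, K, Fin.prod_univ_add, Fin.prod_univ_one, Fin.append_left, Fin.append_right,
      Perm.mul_apply, Perm.natAdd_castAdd, Perm.natAdd_natAdd, Perm.sign_mul,
      Perm.sign_natAdd, Units.val_mul, Int.cast_mul, hx, hy]
    ring
  have hcard : ((Nat.factorial 1 * m.factorial * Nat.factorial 1 * m.factorial : ℕ) : ℂ) ≠ 0 :=
    Nat.cast_ne_zero.mpr (by positivity)
  calc wedgeBlk V 1 1 m m f (altProd k) x y
      = ((Nat.factorial 1 * m.factorial * Nat.factorial 1 * m.factorial : ℕ) : ℂ)⁻¹ *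
          ∑ σ, ∑ σ', ∑ τ, ∑ τ', Φ (σ * Perm.natAdd 1 σ') (τ * Perm.natAdd 1 τ') := by
        rw [wedgeBlk]
        congr 1
        simp only [altProd, Finset.mul_sum, hterm]
        exact Finset.sum_congr rfl fun σ _ => Finset.sum_comm
    _ = altProd K x y := by
        simp only [Fintype.sum_sum_mul_eq_card_smul (Perm.natAdd 1) (Φ _), ← Finset.smul_sum,
          Fintype.sum_sum_mul_eq_card_smul (Perm.natAdd 1) (fun ρ => ∑ π, Φ ρ π)]
        rw [inv_mul_eq_iff_eq_mul₀ hcard]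
        simp only [altProd, Φ, Fintype.card_perm, Fintype.card_fin, nsmul_eq_mul]
        push_cast
        ring

theorem wedgeBlk_one_altProd_cast {V : Type*} {m : ℕ} (f : Blk V 1 1) (k : Fin m → V → V → ℂ)
    (h : 1 + m = m + 1) (x y : Fin (m + 1) → V) :
    wedgeBlk V 1 1 m m f (altProd k) (fun i => x (Fin.cast h i)) (fun j => y (Fin.cast h j)) =
      altProd (Fin.cons (fun a b => f (fun _ => a) (fun _ => b)) k) x y := by
  rw [wedgeBlk_one_altProd, Fin.append_left_eq_cons, ← altProd_comp_equiv (finCongr h)]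
  rfl

theorem powBlk_eq_altProd {V : Type*} (ω : Blk V 1 1) (k : ℕ) (x y : Fin k → V) :
    powBlk ω k x y = altProd (fun _ a b => ω (fun _ => a) (fun _ => b)) x y := by
  induction k with
  | zero => simp [powBlk, altProd]
  | succ m ih =>
    rw [powBlk, show powBlk ω m = altProd _ from funext₂ ih]
    dsimp only
    rw [wedgeBlk_one_altProd_cast]
    congr 1
    exact funext (Fin.cases rfl fun _ => rfl)

section Minors

variable {ι κ : Type*} [Fintype ι] [DecidableEq ι]

def diagKer [Fintype κ] (c u v : κ → ℂ) : ℂ := ∑ i, c i * u i * starRingEnd ℂ (v i)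

def minorDet (x : ι → κ → ℂ) (g : ι → κ) : ℂ := (Matrix.of fun a b => x b (g a)).det

theorem minorDet_eq_sum (x : ι → κ → ℂ) (g : ι → κ) :
    minorDet x g = ∑ σ : Perm ι, ε σ * ∏ i, x (σ i) (g i) := by
  rw [minorDet, ← Matrix.det_transpose, Matrix.det_apply']
  rfl

theorem altProd_diagKer [Fintype κ] (c : ι → κ → ℂ) (x y : ι → κ → ℂ) :
    altProd (fun j => diagKer (c j)) x y =
      ∑ g : ι → κ, (∏ j, c j (g j)) * minorDet x g * starRingEnd ℂ (minorDet y g) := by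
  calc altProd (fun j => diagKer (c j)) x y
      = ∑ σ : Perm ι, ∑ τ : Perm ι, ∑ g : ι → κ,
          ε σ * ε τ * ∏ j, (c j (g j) * x (σ j) (g j) * starRingEnd ℂ (y (τ j) (g j))) := by
        simp only [altProd, diagKer, Fintype.prod_sum, Finset.mul_sum]
    _ = ∑ g : ι → κ, ∑ σ : Perm ι, ∑ τ : Perm ι,
          ε σ * ε τ * ∏ j, (c j (g j) * x (σ j) (g j) * starRingEnd ℂ (y (τ j) (g j))) :=
        (Finset.sum_congr rfl fun σ _ => Finset.sum_comm).trans Finset.sum_comm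
    _ = _ := by
        simp only [minorDet_eq_sum, map_sum, map_mul, map_prod, map_intCast, Finset.mul_sum,
          Finset.sum_mul, Finset.prod_mul_distrib]
        refine Finset.sum_congr rfl fun g _ => Finset.sum_comm.trans ?_
        exact Finset.sum_congr rfl fun σ _ => Finset.sum_congr rfl fun τ _ => by ring

theorem minorDet_comp_perm (x : ι → κ → ℂ) (g : ι → κ) (π : Perm ι) :
    minorDet x (g ∘ π) = ε π * minorDet x g := by
  rw [minorDet, minorDet, ← Matrix.det_permute]
  rfl

theorem minorDet_eq_zero_of_not_injective (x : ι → κ → ℂ) {g : ι → κ}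
    (hg : ¬ Function.Injective g) : minorDet x g = 0 := by
  obtain ⟨a, b, hab, hne⟩ := Function.not_injective_iff.mp hg
  exact Matrix.det_zero_of_row_eq hne (funext fun j => by simp [hab])

theorem minorDet_mul_conj_comp_perm (x y : ι → κ → ℂ) (g : ι → κ) (π : Perm ι) :
    minorDet x (g ∘ π) * starRingEnd ℂ (minorDet y (g ∘ π)) =
      minorDet x g * starRingEnd ℂ (minorDet y g) := by
  have hsq : ε π * ε π = 1 := by
    rw [← Int.cast_mul, ← Units.val_mul, Int.units_mul_self, Units.val_one, Int.cast_one]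
  rw [minorDet_comp_perm, minorDet_comp_perm, map_mul, map_intCast]
  linear_combination (minorDet x g * starRingEnd ℂ (minorDet y g)) * hsq

end Minors

open Set.powersetCard (ofFinEmbEquiv)

theorem sum_eq_sum_powersetCard_sum_perm {β : Type*} [AddCommMonoid β] {k n : ℕ}
    (Φ : (Fin k → Fin n) → β) (hΦ : ∀ g, ¬ Function.Injective g → Φ g = 0) :
    ∑ g, Φ g = ∑ S : Set.powersetCard (Fin n) k, ∑ π : Perm (Fin k),
      Φ (ofFinEmbEquiv.symm S ∘ π) := by
  rw [← Fintype.sum_prod_type']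
  symm
  refine Finset.sum_bij_ne_zero (fun p _ _ => ofFinEmbEquiv.symm p.1 ∘ p.2)
    (fun _ _ _ => Finset.mem_univ _) ?_ ?_ (fun _ _ _ => rfl)
  · rintro ⟨S, π⟩ - - ⟨T, ρ⟩ - - h
    have hST : S = T := SetLike.ext fun i => by
      rw [← Set.powersetCard.mem_range_ofFinEmbEquiv_symm_iff_mem,
        ← Set.powersetCard.mem_range_ofFinEmbEquiv_symm_iff_mem, ← π.surjective.range_comp,
        ← ρ.surjective.range_comp (ofFinEmbEquiv.symm T)]
      exact Iff.of_eq (congrArg (i ∈ Set.range ·) h)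
    subst hST
    exact Prod.ext rfl (Equiv.ext fun j => (ofFinEmbEquiv.symm S).injective (congrFun h j))
  · intro g _ hg
    have hinj : Function.Injective g := not_imp_comm.mp (hΦ g) hg
    set S := Set.powersetCard.ofFinEmb k (Fin n) ⟨g, hinj⟩
    have hrange : Set.range (ofFinEmbEquiv.symm S) = Set.range g := by
      ext i
      rw [Set.powersetCard.mem_range_ofFinEmbEquiv_symm_iff_mem,
        Set.powersetCard.mem_ofFinEmb_iff_mem_range]
      rfl
    set π := ((Equiv.ofInjective g hinj).trans (Equiv.setCongr hrange.symm)).trans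
      (Equiv.ofInjective _ (ofFinEmbEquiv.symm S).injective).symm
    have hπ : ofFinEmbEquiv.symm S ∘ π = g := funext fun _ =>
      Equiv.apply_ofInjective_symm (ofFinEmbEquiv.symm S).injective _
    exact ⟨(S, π), Finset.mem_univ _, hπ ▸ hg, hπ⟩

theorem Fin.sum_perm_apply_zero {β : Type*} [AddCommMonoid β] {m : ℕ} (f : Fin (m + 1) → β) :
    ∑ π : Perm (Fin (m + 1)), f (π 0) = m.factorial • ∑ p, f p := by
  rw [← Equiv.sum_comp Perm.decomposeFin.symm, Fintype.sum_prod_type, Finset.smul_sum]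
  simp [Perm.decomposeFin_symm_apply_zero, Fintype.card_perm]

theorem Set.powersetCard.sum_ofFinEmbEquiv_symm {β : Type*} [AddCommMonoid β] {k n : ℕ}
    (S : Set.powersetCard (Fin n) k) (f : Fin n → β) :
    ∑ j, f (ofFinEmbEquiv.symm S j) = ∑ i ∈ (S : Finset (Fin n)), f i := by
  conv_rhs => rw [← Finset.map_orderEmbOfFin_univ S.val S.prop, Finset.sum_map]
  rfl

theorem sum_apply_zero_mul_minorDet {m n : ℕ} (a : Fin n → ℂ) (x y : Fin (m + 1) → Fin n → ℂ) :
    ∑ g, a (g 0) * (minorDet x g * starRingEnd ℂ (minorDet y g)) =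
      m.factorial * ∑ S : Set.powersetCard (Fin n) (m + 1),
        (∑ i ∈ (S : Finset (Fin n)), a i) *
          (minorDet x (ofFinEmbEquiv.symm S) * starRingEnd ℂ (minorDet y (ofFinEmbEquiv.symm S))) := by
  rw [sum_eq_sum_powersetCard_sum_perm _ fun g hg => by
    rw [minorDet_eq_zero_of_not_injective x hg, zero_mul, mul_zero], Finset.mul_sum]
  refine Finset.sum_congr rfl fun S _ => ?_
  simp only [Function.comp_apply, minorDet_mul_conj_comp_perm, ← Finset.sum_mul,
    Fin.sum_perm_apply_zero fun p => a (ofFinEmbEquiv.symm S p),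
    Set.powersetCard.sum_ofFinEmbEquiv_symm, nsmul_eq_mul]
  ring

/-- `Σ_S c_S (√-1)^k ξ_S ∧ ξ̄_S` in the block form of `StrongPos`, where
`ξ_S = ξ_{s₁} ∧ … ∧ ξ_{s_k}` for the increasing enumeration `s₁ < … < s_k` of `S`. -/
def minorForm {n k : ℕ} (c : Set.powersetCard (Fin n) k → ℝ) : Blk (Fin n → ℂ) k k :=
  fun x y => (-Complex.I) ^ k * ∑ S, (c S : ℂ) *
    (minorDet x (ofFinEmbEquiv.symm S) * starRingEnd ℂ (minorDet y (ofFinEmbEquiv.symm S)))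

theorem wedgeBlk_powBlk_eq_minorForm {n m : ℕ} (a : Fin n → ℝ) (h : 1 + m = m + 1)
    (x y : Fin (m + 1) → Fin n → ℂ) :
    wedgeBlk (Fin n → ℂ) 1 1 m m
        (fun (x y : Fin 1 → Fin n → ℂ) =>
          -Complex.I * ∑ i, (a i : ℂ) * x 0 i * starRingEnd ℂ (y 0 i))
        (powBlk (fun (x y : Fin 1 → Fin n → ℂ) =>
          -Complex.I * ∑ i, x 0 i * starRingEnd ℂ (y 0 i)) m)
        (fun i => x (Fin.cast h i)) (fun j => y (Fin.cast h j)) =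
      minorForm (fun S => m.factorial * ∑ i ∈ (S : Finset (Fin n)), a i) x y := by
  set c : Fin (m + 1) → Fin n → ℂ := Fin.cons (fun i => -Complex.I * a i) fun _ _ => -Complex.I
  have hker : Fin.cons (fun u v => -Complex.I * ∑ i, (a i : ℂ) * u i * starRingEnd ℂ (v i))
      (fun _ u v => -Complex.I * ∑ i, u i * starRingEnd ℂ (v i)) = fun j => diagKer (c j) := by
    funext j u v
    refine Fin.cases ?_ (fun _ => ?_) j <;> simp [c, diagKer, Finset.mul_sum, mul_assoc]
  have hprod (g : Fin (m + 1) → Fin n) : ∏ j, c j (g j) = (-Complex.I) ^ (m + 1) * a (g 0) := by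
    simp only [c, Fin.prod_univ_succ, Fin.cons_zero, Fin.cons_succ, Finset.prod_const,
      Finset.card_univ, Fintype.card_fin, pow_succ']
    ring
  rw [funext₂ (powBlk_eq_altProd _ m)]
  dsimp only
  rw [wedgeBlk_one_altProd_cast, hker, altProd_diagKer]
  simp only [hprod, mul_assoc, ← Finset.mul_sum]
  rw [sum_apply_zero_mul_minorDet (fun i => (a i : ℂ)), minorForm]
  congr 1
  rw [Finset.mul_sum]
  refine Finset.sum_congr rfl fun S _ => ?_
  push_cast
  ring

theorem Complex.I_pow_mul_neg_I_pow (k : ℕ) : Complex.I ^ k * (-Complex.I) ^ k = 1 := by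
  rw [← mul_pow]
  simp

theorem weakPos_of_strongPos {V : Type*} [AddCommGroup V] [Module ℂ V] {k : ℕ} {F : Blk V k k}
    (h : StrongPos k F) : WeakPos k F := by
  obtain ⟨N, c, ξ, hc, hF⟩ := h
  intro x
  have hval : Complex.I ^ k * F x x =
      ((∑ m, c m * Complex.normSq (Matrix.of fun a b => ξ m a (x b)).det : ℝ) : ℂ) := by
    rw [hF, Finset.mul_sum]
    push_cast
    refine Finset.sum_congr rfl fun m _ => ?_
    rw [← Complex.mul_conj]
    linear_combination (c m * (Matrix.of fun a b => ξ m a (x b)).det *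
      starRingEnd ℂ (Matrix.of fun a b => ξ m a (x b)).det) * Complex.I_pow_mul_neg_I_pow k
  rw [hval, Complex.ofReal_re, Complex.ofReal_im]
  exact ⟨Finset.sum_nonneg fun m _ => mul_nonneg (hc m) (Complex.normSq_nonneg _), rfl⟩

theorem strongPos_minorForm {n k : ℕ} {c : Set.powersetCard (Fin n) k → ℝ} (hc : ∀ S, 0 ≤ c S) :
    StrongPos k (minorForm c) := by
  set e := (Fintype.equivFin ↥(Set.powersetCard (Fin n) k)).symm
  refine ⟨_, c ∘ e, fun m a => LinearMap.proj (ofFinEmbEquiv.symm (e m) a), fun m => hc _,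
    fun x y => ?_⟩
  rw [minorForm, Finset.mul_sum, ← e.sum_comp]
  refine Finset.sum_congr rfl fun m _ => ?_
  simp only [minorDet, Function.comp_apply, LinearMap.proj_apply]
  ring

theorem minorDet_single {n k : ℕ} (S T : Set.powersetCard (Fin n) k) :
    minorDet (fun b => Pi.single (ofFinEmbEquiv.symm S b) 1) (ofFinEmbEquiv.symm T) =
      if T = S then 1 else 0 := by
  split_ifs with hTS
  · subst hTS
    rw [minorDet, ← Matrix.det_one (n := Fin k) (R := ℂ)]
    congr 1
    ext a b
    simp [Matrix.one_apply, Pi.single_apply]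
  · obtain ⟨i, hiT, hiS⟩ := (Set.powersetCard.exists_mem_notMem_iff_ne T S).mp hTS
    obtain ⟨a, rfl⟩ := (Set.powersetCard.mem_range_ofFinEmbEquiv_symm_iff_mem T i).mpr hiT
    refine Matrix.det_eq_zero_of_row_eq_zero a fun b => Pi.single_eq_of_ne ?_ _
    rintro h
    exact hiS (h ▸ (Set.powersetCard.mem_range_ofFinEmbEquiv_symm_iff_mem S _).mp ⟨b, rfl⟩)

theorem nonneg_of_weakPos_minorForm {n k : ℕ} {c : Set.powersetCard (Fin n) k → ℝ}
    (h : WeakPos k (minorForm c)) (S : Set.powersetCard (Fin n) k) : 0 ≤ c S := by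
  set x : Fin k → Fin n → ℂ := fun b => Pi.single (ofFinEmbEquiv.symm S b) 1
  have hval : Complex.I ^ k * minorForm c x x = c S := by
    simp [x, minorForm, minorDet_single, ← mul_assoc, Complex.I_pow_mul_neg_I_pow]
  simpa only [hval, Complex.ofReal_re] using (h x).1

theorem weakPos_minorForm_iff {n k : ℕ} {c : Set.powersetCard (Fin n) k → ℝ} :
    WeakPos k (minorForm c) ↔ ∀ S, 0 ≤ c S :=
  ⟨nonneg_of_weakPos_minorForm, fun h => weakPos_of_strongPos (strongPos_minorForm h)⟩

theorem strongPos_minorForm_iff {n k : ℕ} {c : Set.powersetCard (Fin n) k → ℝ} :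
    StrongPos k (minorForm c) ↔ ∀ S, 0 ≤ c S :=
  ⟨fun h => nonneg_of_weakPos_minorForm (weakPos_of_strongPos h), strongPos_minorForm⟩

theorem Fin.val_le_val_of_strictMono {k n : ℕ} {f : Fin k → Fin n} (hf : StrictMono f)
    (i : Fin k) : (i : ℕ) ≤ f i := by
  have h := Finset.card_le_card_of_injOn (s := Finset.Iic i) (t := Finset.Iic (f i)) f
    (fun a ha => Finset.mem_Iic.2 (hf.monotone (Finset.mem_Iic.1 ha))) hf.injective.injOn
  simpa only [Fin.card_Iic, Nat.add_le_add_iff_right] using h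

theorem sum_castLE_le_sum_of_card_eq {β : Type*} [AddCommMonoid β] [PartialOrder β]
    [IsOrderedAddMonoid β] {n q : ℕ} {α : Fin n → β} (hα : Monotone α) (hqn : q ≤ n)
    {s : Finset (Fin n)} (hs : s.card = q) :
    ∑ i : Fin q, α (Fin.castLE hqn i) ≤ ∑ i ∈ s, α i := by
  conv_rhs => rw [← s.map_orderEmbOfFin_univ hs, Finset.sum_map]
  exact Finset.sum_le_sum fun j _ =>
    hα (Fin.le_def.2 (Fin.val_le_val_of_strictMono (s.orderEmbOfFin hs).strictMono j))

theorem omega_q_positivity_eigenvalue_criterion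
    (n q : ℕ) (hq : 1 ≤ q) (hqn : q ≤ n)
    (α : Fin n → ℝ) (hα : Monotone α) :
    -- η = -√-1 Σ α_i ξ_i ∧ ξ̄_i and ω = -√-1 Σ ξ_i ∧ ξ̄_i on V = ℂⁿ;
    let V := Fin n → ℂ
    let η : Blk V 1 1 := fun x y =>
      -Complex.I * ∑ i, (α i : ℂ) * x 0 i * (starRingEnd ℂ) (y 0 i)
    let ω : Blk V 1 1 := fun x y =>
      -Complex.I * ∑ i, x 0 i * (starRingEnd ℂ) (y 0 i)
    let F : Blk V q q := fun x y =>
      wedgeBlk V 1 1 (q - 1) (q - 1) η (powBlk ω (q - 1))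
        (fun i => x (Fin.cast (by omega) i)) (fun j => y (Fin.cast (by omega) j))
    -- (i) ↔ (iv):
    (WeakPos q F ↔ ∀ s : Finset (Fin n), s.card = q → 0 ≤ ∑ i ∈ s, α i)
    -- (ii) ↔ (iv):
    ∧ (StrongPos q F ↔ ∀ s : Finset (Fin n), s.card = q → 0 ≤ ∑ i ∈ s, α i)
    -- (iv) ↔ (sum of the q smallest eigenvalues is non-negative):
    ∧ ((∀ s : Finset (Fin n), s.card = q → 0 ≤ ∑ i ∈ s, α i)
        ↔ 0 ≤ ∑ i : Fin q, α (Fin.castLE hqn i)) := by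
  intro V η ω F
  obtain ⟨m, rfl⟩ : ∃ m, q = m + 1 := ⟨q - 1, by omega⟩
  have hF : F = minorForm fun S => m.factorial * ∑ i ∈ (S : Finset (Fin n)), α i :=
    funext₂ fun x y => wedgeBlk_powBlk_eq_minorForm α _ x y
  have hsubsets : (∀ S : Set.powersetCard (Fin n) (m + 1),
      0 ≤ m.factorial * ∑ i ∈ (S : Finset (Fin n)), α i) ↔
      ∀ s : Finset (Fin n), s.card = m + 1 → 0 ≤ ∑ i ∈ s, α i := by
    simp only [mul_nonneg_iff_of_pos_left (Nat.cast_pos.2 m.factorial_pos)]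
    exact ⟨fun h s hs => h ⟨s, hs⟩, fun h S => h S S.prop⟩
  rw [hF, weakPos_minorForm_iff, strongPos_minorForm_iff, hsubsets]
  refine ⟨Iff.rfl, Iff.rfl, fun h => ?_,
    fun h s hs => h.trans (sum_castLE_le_sum_of_card_eq hα hqn hs)⟩
  simpa using h (Finset.univ.map (Fin.castLEEmb hqn)) (by simp)
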